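/- arXiv:1712.06248 — 2 statements merged into one kernel-verified Lean document; each statement's English description precedes it below -/
import Mathlib

section
/- Let C be a monoidal category satisfying conditions (I)–(IV) (right rigid, Krull–Schmidt, k := C(𝟙,𝟙) a field, all hom-spaces finitely generated over k), with k algebraically closed. If there exists X ∈ 𝓑 = { X ∈ inde C | C(𝟙,X) ≠ 0 } with dim_k C(𝟙,X) > 1, then the decategorification map Ob : TId(C) → Id([C]_⊕) is not an isomorphism. -/
/-!
Suppose `Ob` reflected the order. The tensor ideal generated by a nonzero `φ : 𝟙 ⟶ X` has the
same `Ob` as the ideal of morphisms factoring through objects of that `Ob`, so it lies below it: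
`φ` factors as `𝟙 ⟶ Z ⟶ X` with `1_Z` in the ideal. The first factor is itself `φ ≫ t`, and since
`End X` is local, `t` splits, so `X` is a summand of `Z` and `1_X` lies in the ideal generated by
`φ`. Hence every `ψ : 𝟙 ⟶ X` is `φ ≫ e` for some `e ∈ End X`. Applied to `φ ≫ n` with `n` a
non-unit, this forces `φ ≫ n = 0`; writing `e = c + n` with `c` in the spectrum of `e` (here `k` is
algebraically closed and `End X` is finite-dimensional) gives `ψ = c • φ`, so
`dim C(𝟙, X) ≤ 1`.
-/

open CategoryTheory CategoryTheory.Limits CategoryTheory.MonoidalCategory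

namespace TIP

attribute [local instance] CategoryTheory.Limits.hasBinaryBiproducts_of_finite_biproducts

universe v u v₂ u₂

section DirectSummand

variable {C : Type u} [Category.{v} C]

/-- `X` is a direct summand of `Y` (i.e. `X` is a retract of `Y`). -/
def IsDirectSummand (X Y : C) : Prop := ∃ (i : X ⟶ Y) (r : Y ⟶ X), i ≫ r = 𝟙 X

end DirectSummand

section Submod

variable {C : Type u} [Category.{v} C] [Preadditive C]

/-- A subfunctor (submodule) of the representable module `P_Z = C(Z, -)`. -/
structure Submod (Z : C) where
  carrier : ∀ X : C, AddSubgroup (Z ⟶ X)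
  map_mem : ∀ {X Y : C} (f : X ⟶ Y) {φ : Z ⟶ X}, φ ∈ carrier X → φ ≫ f ∈ carrier Y

theorem Submod.ext' {Z : C} {M N : Submod Z} (h : M.carrier = N.carrier) : M = N := by
  cases M; cases N; cases h; rfl

instance {Z : C} : PartialOrder (Submod Z) where
  le M N := ∀ X : C, M.carrier X ≤ N.carrier X
  le_refl M X := le_rfl
  le_trans M N P h h' X := (h X).trans (h' X)
  le_antisymm M N h h' := Submod.ext' (funext fun X => le_antisymm (h X) (h' X))

/-- Post-composition with a fixed morphism, as an additive map. -/
def postcompHom (Z : C) {X Y : C} (f : X ⟶ Y) : (Z ⟶ X) →+ (Z ⟶ Y) where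
  toFun g := g ≫ f
  map_zero' := Limits.zero_comp
  map_add' a b := Preadditive.add_comp _ _ _ _ _ _

/-- The trace submodule `Tr_S P_Z` of the representable module `P_Z`, for a class
of objects `S`. -/
def traceSub (Z : C) (S : Set C) : Submod Z where
  carrier Y := AddSubgroup.closure {h : Z ⟶ Y | ∃ W ∈ S, ∃ (b : Z ⟶ W) (a : W ⟶ Y), h = b ≫ a}
  map_mem := by
    intro X Y f φ hφ
    have h1 : postcompHom Z f φ ∈ (AddSubgroup.closure
        {h : Z ⟶ X | ∃ W ∈ S, ∃ (b : Z ⟶ W) (a : W ⟶ X), h = b ≫ a}).map (postcompHom Z f) :=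
      AddSubgroup.mem_map_of_mem _ hφ
    rw [AddMonoidHom.map_closure] at h1
    refine AddSubgroup.closure_mono ?_ h1
    rintro x ⟨h, ⟨W, hW, b, a, rfl⟩, rfl⟩
    exact ⟨W, hW, b, a ≫ f, by simp [postcompHom]⟩

/-- The action of the endomorphism ring `C(X,X)` on `C(Z,X)` by post-composition. -/
instance endSMul {Z X : C} : SMul (End X) (Z ⟶ X) := ⟨fun e φ => φ ≫ e⟩

theorem end_smul_def {Z X : C} (e : End X) (φ : Z ⟶ X) : e • φ = φ ≫ e := rfl

/-- `C(Z,X)` is a left module over the endomorphism ring `C(X,X)`. -/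
instance endModule {Z X : C} : Module (End X) (Z ⟶ X) where
  one_smul φ := by simp [end_smul_def, End.one_def]
  mul_smul e f φ := by simp [end_smul_def, End.mul_def]
  smul_zero e := by simp [end_smul_def]
  smul_add e φ ψ := Preadditive.add_comp _ _ _ _ _ _
  add_smul e f φ := Preadditive.comp_add _ _ _ _ _ _
  zero_smul φ := by simp [end_smul_def]

end Submod

section KS

variable {C : Type u} [Category.{v} C] [Preadditive C] [HasBinaryBiproducts C]

/-- An object of an additive category is indecomposable if it is nonzero and
any decomposition as a biproduct has a zero summand. -/
def Indecomposable (X : C) : Prop :=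
  ¬ IsZero X ∧ ∀ Y Z : C, Nonempty (X ≅ Y ⊞ Z) → IsZero Y ∨ IsZero Z

end KS

section KS2

variable (C : Type u) [Category.{v} C] [Preadditive C] [HasFiniteBiproducts C]

/-- A Krull-Schmidt category: every object is a finite biproduct of indecomposable
objects, and indecomposable objects have local endomorphism rings. -/
structure IsKrullSchmidt : Prop where
  local_end : ∀ X : C, Indecomposable X → IsLocalRing (End X)
  decomp : ∀ X : C, ∃ (n : ℕ) (f : Fin n → C),
    (∀ i, Indecomposable (f i)) ∧ Nonempty (X ≅ ⨁ f)

end KS2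

section Monoidal

variable {C : Type u} [Category.{v} C] [MonoidalCategory C]

/-- A right dual `(X^∨, ev_X, co_X)` of an object `X`, with
`ev_X : X ⊗ X^∨ ⟶ 𝟙` and `co_X : 𝟙 ⟶ X^∨ ⊗ X` satisfying the zigzag identities. -/
structure RightDual (X : C) where
  dual : C
  ev : X ⊗ dual ⟶ 𝟙_ C
  coev : 𝟙_ C ⟶ dual ⊗ X
  zigzag₁ : (ρ_ X).inv ≫ (X ◁ coev) ≫ (α_ X dual X).inv ≫ (ev ▷ X) ≫ (λ_ X).hom = 𝟙 X
  zigzag₂ : (λ_ dual).inv ≫ (coev ▷ dual) ≫ (α_ dual X dual).hom ≫ (dual ◁ ev) ≫ (ρ_ dual).hom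
      = 𝟙 dual

/-- The map `ι_{XY} : C(𝟙, X^∨ ⊗ Y) → C(X, Y)`, `φ ↦ (ev_X ⊗ 1_Y) ∘ (1_X ⊗ φ)`,
defined in terms of the raw data of a dual object and an evaluation morphism. -/
def iotaRaw {X : C} (Xd : C) (ev : X ⊗ Xd ⟶ 𝟙_ C) {Y : C} (φ : 𝟙_ C ⟶ Xd ⊗ Y) : X ⟶ Y :=
  (ρ_ X).inv ≫ (X ◁ φ) ≫ (α_ X Xd Y).inv ≫ (ev ▷ Y) ≫ (λ_ Y).hom

/-- The isomorphism `ι_{XY} : C(𝟙, X^∨ ⊗ Y) → C(X, Y)`, `φ ↦ (ev_X ⊗ 1_Y) ∘ (1_X ⊗ φ)`. -/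
def iota {X : C} (D : RightDual X) {Y : C} (φ : 𝟙_ C ⟶ D.dual ⊗ Y) : X ⟶ Y :=
  iotaRaw D.dual D.ev φ

/-- The inverse of `ι_{XY}`, given by `f ↦ (1_{X^∨} ⊗ f) ∘ co_X`. -/
def iotaInv {X : C} (D : RightDual X) {Y : C} (f : X ⟶ Y) : 𝟙_ C ⟶ D.dual ⊗ Y :=
  D.coev ≫ (D.dual ◁ f)

end Monoidal

section TId

variable (C : Type u) [Category.{v} C] [Preadditive C] [MonoidalCategory C]

/-- A left-tensor ideal in a preadditive monoidal category. -/
structure TensorIdeal where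
  carrier : ∀ X Y : C, AddSubgroup (X ⟶ Y)
  comp_pre : ∀ {W X Y : C} (g : W ⟶ X) {f : X ⟶ Y}, f ∈ carrier X Y → g ≫ f ∈ carrier W Y
  comp_post : ∀ {X Y Z : C} {f : X ⟶ Y} (h : Y ⟶ Z), f ∈ carrier X Y → f ≫ h ∈ carrier X Z
  whisker_mem : ∀ (Z : C) {X Y : C} {f : X ⟶ Y}, f ∈ carrier X Y →
    Z ◁ f ∈ carrier (Z ⊗ X) (Z ⊗ Y)

variable {C}

theorem TensorIdeal.ext' {J K : TensorIdeal C} (h : J.carrier = K.carrier) : J = K := by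
  cases J; cases K; cases h; rfl

instance : PartialOrder (TensorIdeal C) where
  le J K := ∀ X Y : C, J.carrier X Y ≤ K.carrier X Y
  le_refl J X Y := le_rfl
  le_trans J K L h h' X Y := (h X Y).trans (h' X Y)
  le_antisymm J K h h' :=
    TensorIdeal.ext' (funext fun X => funext fun Y => le_antisymm (h X Y) (h' X Y))

variable (C)

/-- The tensor ideal of all morphisms. -/
def TensorIdeal.top : TensorIdeal C where
  carrier _ _ := ⊤
  comp_pre := by intros; exact AddSubgroup.mem_top _
  comp_post := by intros; exact AddSubgroup.mem_top _
  whisker_mem := by intros; exact AddSubgroup.mem_top _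

variable {C}

/-- `Ψ` maps a tensor ideal `J` to the subfunctor `J(𝟙, -)` of the principal module
`P_𝟙 = C(𝟙, -)`. -/
def Psi (J : TensorIdeal C) : Submod (𝟙_ C) where
  carrier X := J.carrier (𝟙_ C) X
  map_mem := by intro X Y f φ hφ; exact J.comp_post f hφ

variable (C) [MonoidalPreadditive C]

/-- The zero tensor ideal. -/
def TensorIdeal.bot : TensorIdeal C where
  carrier _ _ := ⊥
  comp_pre := by
    intro W X Y g f hf
    rw [AddSubgroup.mem_bot] at *
    rw [hf, Limits.comp_zero]
  comp_post := by
    intro X Y Z f h hf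
    rw [AddSubgroup.mem_bot] at *
    rw [hf, Limits.zero_comp]
  whisker_mem := by
    intro Z X Y f hf
    rw [AddSubgroup.mem_bot] at *
    rw [hf, MonoidalPreadditive.whiskerLeft_zero]

end TId

section Thick

variable (C : Type u) [Category.{v} C] [Preadditive C] [MonoidalCategory C]
  [HasBinaryBiproducts C]

/-- A thick left-tensor Ob-ideal: an isomorphism closed class of objects, closed under
direct sums, direct summands, and tensoring on the left by arbitrary objects. -/
structure ThickIdeal where
  carrier : Set C
  iso_mem : ∀ {X Y : C}, (X ≅ Y) → X ∈ carrier → Y ∈ carrier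
  biprod_mem_iff : ∀ X Y : C, ((X ⊞ Y) ∈ carrier ↔ (X ∈ carrier ∧ Y ∈ carrier))
  tensor_mem : ∀ (Y : C) {X : C}, X ∈ carrier → (Y ⊗ X) ∈ carrier

variable {C}

theorem ThickIdeal.ext' {I I' : ThickIdeal C} (h : I.carrier = I'.carrier) : I = I' := by
  cases I; cases I'; cases h; rfl

instance : PartialOrder (ThickIdeal C) where
  le I I' := I.carrier ⊆ I'.carrier
  le_refl I := Set.Subset.refl _
  le_trans I I' I'' h h' := Set.Subset.trans h h'
  le_antisymm I I' h h' := ThickIdeal.ext' (le_antisymm h h')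

/-- The decategorification map `Ob`, sending a tensor ideal `J` to the thick
left-tensor Ob-ideal of objects `X` with `1_X ∈ J(X,X)`. -/
def obIdeal (J : TensorIdeal C) : ThickIdeal C where
  carrier := {X : C | 𝟙 X ∈ J.carrier X X}
  iso_mem := by
    intro X Y e hX
    have h := J.comp_pre e.inv (J.comp_post e.hom hX)
    simpa using h
  biprod_mem_iff := by
    intro X Y
    constructor
    · intro h
      constructor
      · have h1 := J.comp_pre (biprod.inl : X ⟶ X ⊞ Y) (J.comp_post (biprod.fst : X ⊞ Y ⟶ X) h)
        simpa using h1
      · have h1 := J.comp_pre (biprod.inr : Y ⟶ X ⊞ Y) (J.comp_post (biprod.snd : X ⊞ Y ⟶ Y) h)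
        simpa using h1
    · rintro ⟨hX, hY⟩
      have h1 := J.comp_pre (biprod.fst : X ⊞ Y ⟶ X) (J.comp_post (biprod.inl : X ⟶ X ⊞ Y) hX)
      have h2 := J.comp_pre (biprod.snd : X ⊞ Y ⟶ Y) (J.comp_post (biprod.inr : Y ⟶ X ⊞ Y) hY)
      simp only [Category.id_comp] at h1 h2
      have h3 := AddSubgroup.add_mem _ h1 h2
      rw [biprod.total] at h3
      exact h3
  tensor_mem := by
    intro Y X hX
    have h := J.whisker_mem Y hX
    simpa using h

end Thick

section Braided

variable {C : Type u} [Category.{v} C] [MonoidalCategory C] [BraidedCategory C]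

/-- The trace of an endomorphism, with respect to a choice of right duals. -/
def traceMor (D : ∀ X : C, RightDual X) {X : C} (f : X ⟶ X) : 𝟙_ C ⟶ 𝟙_ C :=
  (D X).coev ≫ ((D X).dual ◁ f) ≫ (β_ (D X).dual X).hom ≫ (D X).ev

end Braided


section PrincipalIdeal

theorem unit_comp_whiskerLeft {C : Type u} [Category.{v} C] [MonoidalCategory C] {X Z : C}
    (g : 𝟙_ C ⟶ Z ⊗ 𝟙_ C) (φ : 𝟙_ C ⟶ X) :
    g ≫ (Z ◁ φ) = φ ≫ (λ_ X).inv ≫ ((g ≫ (ρ_ Z).hom) ▷ X) := by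
  have hg : g = (λ_ (𝟙_ C)).inv ≫ ((g ≫ (ρ_ Z).hom) ▷ 𝟙_ C) := by
    rw [unitors_inv_equal, ← rightUnitor_inv_naturality]
    simp
  rw [leftUnitor_inv_naturality_assoc, whisker_exchange, ← Category.assoc, ← hg]

variable {C : Type u} [Category.{v} C] [Preadditive C] [MonoidalCategory C]

theorem TensorIdeal.mem_of_id_mem (J : TensorIdeal C) {A Z : C} (f : A ⟶ Z)
    (hZ : 𝟙 Z ∈ J.carrier Z Z) : f ∈ J.carrier A Z := by
  simpa using J.comp_pre f hZ

theorem TensorIdeal.id_mem_of_isDirectSummand (J : TensorIdeal C) {X Z : C}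
    (hXZ : IsDirectSummand X Z) (hZ : 𝟙 Z ∈ J.carrier Z Z) : 𝟙 X ∈ J.carrier X X := by
  obtain ⟨i, r, hir⟩ := hXZ
  simpa [hir] using J.comp_post r (J.mem_of_id_mem i hZ)

variable [MonoidalPreadditive C] [HasBinaryBiproducts C]

/-- The left-tensor ideal generated by `φ : 𝟙 ⟶ X`. -/
def TensorIdeal.principal {X : C} (φ : 𝟙_ C ⟶ X) : TensorIdeal C where
  carrier A B :=
    { carrier := {f | ∃ (Z : C) (a : A ⟶ Z ⊗ 𝟙_ C) (b : Z ⊗ X ⟶ B), f = a ≫ (Z ◁ φ) ≫ b}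
      zero_mem' := ⟨𝟙_ C, 0, 0, by simp⟩
      add_mem' := by
        rintro f₁ f₂ ⟨Z₁, a₁, b₁, rfl⟩ ⟨Z₂, a₂, b₂, rfl⟩
        refine ⟨Z₁ ⊞ Z₂, a₁ ≫ (biprod.inl ▷ 𝟙_ C) + a₂ ≫ (biprod.inr ▷ 𝟙_ C),
          (biprod.fst ▷ X) ≫ b₁ + (biprod.snd ▷ X) ≫ b₂, ?_⟩
        simp only [Preadditive.add_comp, Preadditive.comp_add, Category.assoc,
          whisker_exchange_assoc, ← comp_whiskerRight_assoc, biprod.inl_fst, biprod.inl_snd,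
          biprod.inr_fst, biprod.inr_snd, id_whiskerRight, Category.id_comp,
          MonoidalPreadditive.zero_whiskerRight, Limits.zero_comp, Limits.comp_zero,
          add_zero, zero_add]
      neg_mem' := by
        rintro f ⟨Z, a, b, rfl⟩
        exact ⟨Z, a, -b, by simp⟩ }
  comp_pre := by
    rintro W A B g f ⟨Z, a, b, rfl⟩
    exact ⟨Z, g ≫ a, b, by simp⟩
  comp_post := by
    rintro A B B' f h ⟨Z, a, b, rfl⟩
    exact ⟨Z, a, b ≫ h, by simp⟩
  whisker_mem := by
    rintro W A B f ⟨Z, a, b, rfl⟩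
    refine ⟨W ⊗ Z, (W ◁ a) ≫ (α_ W Z (𝟙_ C)).inv, (α_ W Z X).hom ≫ (W ◁ b), ?_⟩
    simp only [whiskerLeft_comp, tensor_whiskerLeft_symm, Category.assoc]

theorem TensorIdeal.mem_principal_self {X : C} (φ : 𝟙_ C ⟶ X) :
    φ ∈ (TensorIdeal.principal φ).carrier (𝟙_ C) X :=
  ⟨𝟙_ C, (λ_ (𝟙_ C)).inv, (λ_ X).hom, id_whiskerLeft_symm φ⟩

theorem TensorIdeal.exists_eq_comp_of_mem_principal {X B : C} {φ : 𝟙_ C ⟶ X} {f : 𝟙_ C ⟶ B}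
    (hf : f ∈ (TensorIdeal.principal φ).carrier (𝟙_ C) B) : ∃ h : X ⟶ B, f = φ ≫ h := by
  obtain ⟨Z, a, b, rfl⟩ := hf
  exact ⟨(λ_ X).inv ≫ ((a ≫ (ρ_ Z).hom) ▷ X) ≫ b, by
    rw [← Category.assoc, unit_comp_whiskerLeft]; simp⟩

end PrincipalIdeal

section SpanOb

variable {C : Type u} [Category.{v} C] [Preadditive C] [MonoidalCategory C]
  [HasFiniteBiproducts C]

open ZeroObject

/-- The smallest tensor ideal with the same objects as `J`: the morphisms factoring through
an object of `Ob J`. -/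
def TensorIdeal.spanOb (J : TensorIdeal C) : TensorIdeal C where
  carrier A B :=
    { carrier := {f | ∃ (Z : C) (a : A ⟶ Z) (b : Z ⟶ B), Z ∈ (obIdeal J).carrier ∧ f = a ≫ b}
      zero_mem' := ⟨0, 0, 0, by simp [obIdeal, id_zero], by simp⟩
      add_mem' := by
        rintro f₁ f₂ ⟨Z₁, a₁, b₁, h₁, rfl⟩ ⟨Z₂, a₂, b₂, h₂, rfl⟩
        exact ⟨Z₁ ⊞ Z₂, biprod.lift a₁ a₂, biprod.desc b₁ b₂,
          ((obIdeal J).biprod_mem_iff Z₁ Z₂).2 ⟨h₁, h₂⟩, by simp⟩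
      neg_mem' := by
        rintro f ⟨Z, a, b, h, rfl⟩
        exact ⟨Z, a, -b, h, by simp⟩ }
  comp_pre := by
    rintro W A B g f ⟨Z, a, b, h, rfl⟩
    exact ⟨Z, g ≫ a, b, h, by simp⟩
  comp_post := by
    rintro A B B' f h' ⟨Z, a, b, h, rfl⟩
    exact ⟨Z, a, b ≫ h', h, by simp⟩
  whisker_mem := by
    rintro W A B f ⟨Z, a, b, h, rfl⟩
    exact ⟨W ⊗ Z, W ◁ a, W ◁ b, (obIdeal J).tensor_mem W h, by simp⟩

theorem TensorIdeal.obIdeal_le_obIdeal_spanOb (J : TensorIdeal C) :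
    obIdeal J ≤ obIdeal J.spanOb :=
  fun Z hZ => ⟨Z, 𝟙 Z, 𝟙 Z, hZ, by simp⟩

end SpanOb

section LocalEnd

variable {C : Type u} [Category.{v} C] [Preadditive C]

theorem isIso_of_comp_eq_self {W X : C} [IsLocalRing (End X)] {φ : W ⟶ X} (hφ : φ ≠ 0)
    {e : X ⟶ X} (he : φ ≫ e = φ) : IsIso e := by
  refine (isUnit_iff_isIso (End.of e)).1 <|
    (IsLocalRing.isUnit_or_isUnit_of_add_one (add_sub_cancel (End.of e) 1)).resolve_right ?_
  intro hunit
  have hker : φ ≫ (1 - End.of e) = 0 ≫ (1 - End.of e) := by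
    rw [End.one_def, Preadditive.comp_sub, Category.comp_id, he, sub_self, zero_comp]
  have : IsIso (1 - End.of e) := (isUnit_iff_isIso _).1 hunit
  exact hφ ((cancel_mono _).1 hker)

theorem comp_eq_zero_of_not_isUnit {W X : C} [IsLocalRing (End X)]
    [IsDedekindFiniteMonoid (End X)]
    (hfac : ∀ φ ψ : W ⟶ X, φ ≠ 0 → ∃ e : End X, ψ = φ ≫ e)
    (φ : W ⟶ X) {n : End X} (hn : ¬ IsUnit n) : φ ≫ n = 0 := by
  by_contra hφn
  obtain ⟨e, he⟩ := hfac _ φ hφn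
  have hφ : φ ≠ 0 := fun h => hφn (by rw [h, zero_comp])
  have : IsIso (e * n) := isIso_of_comp_eq_self hφ (by rw [End.mul_def, ← Category.assoc, ← he])
  exact hn (isUnit_of_mul_isUnit_right ((isUnit_iff_isIso _).2 this))

theorem exists_smul_eq_of_forall_exists_eq_comp {k : Type*} [Field k] [IsAlgClosed k]
    [Linear k C] {W X : C} [IsLocalRing (End X)] [FiniteDimensional k (End X)]
    (hfac : ∀ φ ψ : W ⟶ X, φ ≠ 0 → ∃ e : End X, ψ = φ ≫ e)
    {φ : W ⟶ X} (hφ : φ ≠ 0) (ψ : W ⟶ X) : ∃ c : k, c • φ = ψ := by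
  obtain ⟨e, rfl⟩ := hfac φ ψ hφ
  obtain ⟨c, hc⟩ := spectrum.nonempty_of_isAlgClosed_of_finiteDimensional k e
  have : IsArtinianRing (End X) := .of_finite k (End X)
  have hn : ¬ IsUnit (e - algebraMap k (End X) c) := fun h =>
    spectrum.mem_iff.1 hc (by simpa using h.neg)
  have hker := comp_eq_zero_of_not_isUnit hfac φ hn
  refine ⟨c, ?_⟩
  rw [Algebra.algebraMap_eq_smul_one, Preadditive.comp_sub, sub_eq_zero, Linear.comp_smul] at hker
  rw [hker, End.one_def, Category.comp_id]

end LocalEnd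

section Reflection

variable {C : Type u} [Category.{v} C] [Preadditive C] [MonoidalCategory C]
  [MonoidalPreadditive C] [HasFiniteBiproducts C]

theorem TensorIdeal.id_mem_principal_of_reflects
    (hrefl : ∀ J K : TensorIdeal C, obIdeal J ≤ obIdeal K → J ≤ K)
    {X : C} [IsLocalRing (End X)] {φ : 𝟙_ C ⟶ X} (hφ : φ ≠ 0) :
    𝟙 X ∈ (principal φ).carrier X X := by
  obtain ⟨Z, a, b, hZ, hab⟩ :=
    hrefl _ _ (principal φ).obIdeal_le_obIdeal_spanOb _ _ (mem_principal_self φ)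
  obtain ⟨t, ht⟩ := exists_eq_comp_of_mem_principal ((principal φ).mem_of_id_mem a hZ)
  have : IsIso (t ≫ b) := isIso_of_comp_eq_self hφ (by rw [← Category.assoc, ← ht, hab])
  have hXZ : IsDirectSummand X Z :=
    ⟨t, b ≫ inv (t ≫ b), by rw [← Category.assoc, IsIso.hom_inv_id]⟩
  exact (principal φ).id_mem_of_isDirectSummand hXZ hZ

theorem TensorIdeal.exists_eq_comp_of_reflects
    (hrefl : ∀ J K : TensorIdeal C, obIdeal J ≤ obIdeal K → J ≤ K)
    {X : C} [IsLocalRing (End X)] {φ : 𝟙_ C ⟶ X} (hφ : φ ≠ 0) (ψ : 𝟙_ C ⟶ X) :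
    ∃ e : End X, ψ = φ ≫ e :=
  exists_eq_comp_of_mem_principal
    ((principal φ).mem_of_id_mem ψ (id_mem_principal_of_reflects hrefl hφ))

end Reflection

section Statement

variable (C : Type u) [Category.{v} C] [Preadditive C] [MonoidalCategory C]
  [MonoidalPreadditive C] [HasFiniteBiproducts C]

theorem dim_gt_one_implies_Ob_not_iso
    (k : Type*) [Field k] [IsAlgClosed k] [CategoryTheory.Linear k C]
    (hfg : ∀ X Y : C, Module.Finite k (X ⟶ Y))
    (hKS : IsKrullSchmidt C)
    (X : C) (hXind : Indecomposable X) (hXB : ∃ φ : 𝟙_ C ⟶ X, φ ≠ 0)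
    (hdim : 1 < Module.finrank k (𝟙_ C ⟶ X)) :
    ¬ (Function.Bijective (obIdeal (C := C)) ∧
        ∀ J K : TensorIdeal C, J ≤ K ↔ obIdeal J ≤ obIdeal K) := by
  rintro ⟨-, hord⟩
  obtain ⟨φ, hφ⟩ := hXB
  have : IsLocalRing (End X) := hKS.local_end X hXind
  have : FiniteDimensional k (End X) := hfg X X
  have hspan : ∀ ψ : 𝟙_ C ⟶ X, ∃ c : k, c • φ = ψ :=
    exists_smul_eq_of_forall_exists_eq_comp
      (fun φ' ψ hφ' => TensorIdeal.exists_eq_comp_of_reflects (fun J K => (hord J K).2) hφ' ψ) hφ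
  have := finrank_le_one φ hspan
  omega

end Statement

end TIP
end

section
/- Let C be a right rigid Krull–Schmidt monoidal category, 𝓑 = { X ∈ inde C | C(𝟙,X) ≠ 0 }, Z ∈ 𝓑, and suppose there exists an indecomposable object X such that add(X^∨⊗X) ∩ 𝓑 = {Z}. Then: (i) co_X factors as a composition 𝟙 → Z^{⊕k} → X^∨⊗X for some k ∈ ℤ_{>0}; (ii) the tensor ideal Ψ^{-1}(Tr_Z P_𝟙) is generated (as a tensor ideal) by 1_X; (iii) the thick left-tensor Ob-ideal Ob(Ψ^{-1}(Tr_Z P_𝟙)) is generated by X; (iv) Ob(Ψ^{-1}(Tr_Z P_𝟙)) is generated by Z. -/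
open CategoryTheory CategoryTheory.Limits CategoryTheory.MonoidalCategory

namespace TIP

attribute [local instance] CategoryTheory.Limits.hasBinaryBiproducts_of_finite_biproducts

universe v u v₂ u₂

/-!
Duality identifies `J(A, B)` with `J(𝟙, A^∨ ⊗ B)` through `f ↦ (1 ⊗ f) ∘ co_A`, so a tensor ideal
is determined by its morphisms out of `𝟙`, i.e. `Ψ` is injective. Decomposing `X^∨ ⊗ X` into
indecomposables, each component of `co_X` either vanishes or lands in a copy of `Z`, so
`co_X ∈ Tr_Z P_𝟙`. Every morphism `𝟙 → W ⊗ X` factors through `co_X`, hence the tensor ideal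
generated by `1_X` has `Ψ`-image `Tr_Z P_𝟙` (the other inclusion because `Z` is a summand of
`X^∨ ⊗ X`), and by injectivity it is the only preimage. Finally, if `1_A` lies in this ideal then
`co_A` factors through some `Z^{⊕m}`, and the zigzag identity exhibits `A` as a retract of
`A ⊗ Z^{⊕m}`; the latter lies in every thick ideal containing `Z`, and in a Krull–Schmidt
category thick ideals are closed under retracts.
-/

theorem AddSubgroup.apply_mem_closure_of_mapsTo {G H : Type*} [AddGroup G] [AddGroup H]
    (φ : G →+ H) {s : Set G} {t : Set H} (hst : Set.MapsTo φ s t) {x : G}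
    (hx : x ∈ AddSubgroup.closure s) : φ x ∈ AddSubgroup.closure t :=
  (AddSubgroup.closure_le ((AddSubgroup.closure t).comap φ)).2
    (fun _ hy => AddSubgroup.subset_closure (hst hy)) hx

section Duality

variable {C : Type u} [Category.{v} C] [MonoidalCategory C]

abbrev RightDual.exactPairing {X : C} (D : RightDual X) : ExactPairing D.dual X where
  coevaluation' := D.coev
  evaluation' := D.ev
  coevaluation_evaluation' := by
    rw [← cancel_epi (ρ_ X).inv, ← cancel_mono (λ_ X).hom]
    simpa using D.zigzag₁
  evaluation_coevaluation' := by
    rw [← cancel_epi (λ_ D.dual).inv, ← cancel_mono (ρ_ D.dual).hom]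
    simpa using D.zigzag₂

theorem RightDual.iota_coev {X : C} (D : RightDual X) : iota D D.coev = 𝟙 X :=
  D.zigzag₁

theorem RightDual.iota_iotaInv {A B : C} (D : RightDual A) (f : A ⟶ B) :
    iota D (iotaInv D f) = f := by
  have h := @tensorLeftHomEquiv_symm_coevaluation_comp_whiskerLeft C _ _ D.dual A B
    D.exactPairing f
  dsimp [tensorLeftHomEquiv] at h
  simp only [iota, iotaRaw, iotaInv]
  exact (congrArg ((ρ_ A).inv ≫ ·) h).trans (by simp)

theorem RightDual.iotaInv_id {X : C} (D : RightDual X) : iotaInv D (𝟙 X) = D.coev := by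
  simp [iotaInv]

theorem RightDual.exists_coev_comp_whiskerRight {X W : C} (D : RightDual X)
    (b : 𝟙_ C ⟶ W ⊗ X) : ∃ g : D.dual ⟶ W, D.coev ≫ (g ▷ X) = b := by
  let _ := D.exactPairing
  refine ⟨(λ_ D.dual).inv ≫ (tensorRightHomEquiv (𝟙_ C) D.dual X W).symm b, ?_⟩
  apply (tensorRightHomEquiv (𝟙_ C) D.dual X W).symm.injective
  exact (tensorRightHomEquiv_symm_coevaluation_comp_whiskerRight _).trans (by simp)

theorem RightDual.isDirectSummand_tensor_of_coev_eq {X M : C} (D : RightDual X)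
    {p : 𝟙_ C ⟶ M} {q : M ⟶ D.dual ⊗ X} (h : D.coev = p ≫ q) : IsDirectSummand X (X ⊗ M) :=
  ⟨(ρ_ X).inv ≫ (X ◁ p), (X ◁ q) ≫ (α_ X D.dual X).inv ≫ (D.ev ▷ X) ≫ (λ_ X).hom, by
    simpa [h] using D.zigzag₁⟩

theorem RightDual.coev_ne_zero [Preadditive C] [MonoidalPreadditive C] {X : C}
    (D : RightDual X) (hX : ¬ IsZero X) : D.coev ≠ 0 := by
  intro h
  apply hX
  rw [IsZero.iff_id_eq_zero, ← D.iota_coev, h]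
  simp [iota, iotaRaw]

end Duality

section DirectSummand

variable {C : Type u} [Category.{v} C]

theorem IsDirectSummand.of_iso {X Y : C} (e : X ≅ Y) : IsDirectSummand X Y :=
  ⟨e.hom, e.inv, e.hom_inv_id⟩

theorem IsDirectSummand.trans {X Y W : C} (h₁ : IsDirectSummand X Y)
    (h₂ : IsDirectSummand Y W) : IsDirectSummand X W := by
  obtain ⟨i₁, r₁, h₁⟩ := h₁
  obtain ⟨i₂, r₂, h₂⟩ := h₂
  exact ⟨i₁ ≫ i₂, r₂ ≫ r₁, by simp [reassoc_of% h₂, h₁]⟩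

theorem isDirectSummand_biproduct [Preadditive C] {J : Type*} (f : J → C) [HasBiproduct f]
    (j : J) : IsDirectSummand (f j) (⨁ f) :=
  ⟨biproduct.ι f j, biproduct.π f j, biproduct.ι_π_self f j⟩

end DirectSummand

section Trace

variable {C : Type u} [Category.{v} C] [Preadditive C]

theorem mem_traceSub_of_iso {P Y W : C} {S : Set C} (hW : W ∈ S) (e : Y ≅ W) (φ : P ⟶ Y) :
    φ ∈ (traceSub P S).carrier Y :=
  AddSubgroup.subset_closure ⟨W, hW, φ ≫ e.hom, e.inv, by simp⟩

theorem mem_traceSub_biproduct {P : C} {S : Set C} {J : Type} [Fintype J] {f : J → C}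
    [HasBiproduct f] (h : P ⟶ ⨁ f)
    (hh : ∀ j, h ≫ biproduct.π f j ∈ (traceSub P S).carrier (f j)) :
    h ∈ (traceSub P S).carrier (⨁ f) := by
  rw [← Category.comp_id h, ← biproduct.total, Preadditive.comp_sum]
  exact AddSubgroup.sum_mem _ fun j _ => by
    simpa only [Category.assoc] using (traceSub P S).map_mem (biproduct.ι f j) (hh j)

theorem mem_traceSub_singleton_iff_exists_sum {P Y Z : C} {h : P ⟶ Y} :
    h ∈ (traceSub P {Z}).carrier Y ↔
      ∃ (n : ℕ) (b : Fin n → (P ⟶ Z)) (a : Fin n → (Z ⟶ Y)), h = ∑ i, b i ≫ a i := by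
  constructor
  · intro hh
    induction hh using AddSubgroup.closure_induction with
    | mem _ hx =>
      obtain ⟨W, rfl, b, a, rfl⟩ := hx
      exact ⟨1, fun _ => b, fun _ => a, by simp⟩
    | zero => exact ⟨0, Fin.elim0, Fin.elim0, by simp⟩
    | add _ _ _ _ hx hy =>
      obtain ⟨m, b, a, rfl⟩ := hx
      obtain ⟨m', b', a', rfl⟩ := hy
      refine ⟨m + m', Fin.append b b', Fin.append a a', ?_⟩
      simp [Fin.sum_univ_add]
    | neg _ _ hx =>
      obtain ⟨m, b, a, rfl⟩ := hx
      exact ⟨m, fun i => -b i, a, by simp⟩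
  · rintro ⟨n, b, a, rfl⟩
    exact AddSubgroup.sum_mem _ fun i _ => AddSubgroup.subset_closure ⟨Z, rfl, b i, a i, rfl⟩

theorem mem_traceSub_singleton_iff_exists_comp [HasFiniteBiproducts C] {P Y Z : C}
    {h : P ⟶ Y} : h ∈ (traceSub P {Z}).carrier Y ↔
      ∃ (n : ℕ) (p : P ⟶ ⨁ fun _ : Fin n => Z) (q : (⨁ fun _ : Fin n => Z) ⟶ Y), h = p ≫ q := by
  rw [mem_traceSub_singleton_iff_exists_sum]
  constructor
  · rintro ⟨n, b, a, rfl⟩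
    exact ⟨n, biproduct.lift b, biproduct.desc a, by rw [biproduct.lift_desc]⟩
  · rintro ⟨n, p, q, rfl⟩
    refine ⟨n, fun i => p ≫ biproduct.π (fun _ : Fin n => Z) i,
      fun i => biproduct.ι (fun _ : Fin n => Z) i ≫ q, ?_⟩
    rw [← biproduct.lift_desc]
    congr 1 <;> ext <;> simp

end Trace

section TensorIdeal

variable {C : Type u} [Category.{v} C] [Preadditive C] [MonoidalCategory C]

theorem TensorIdeal.iota_mem (J : TensorIdeal C) {A B : C} (D : RightDual A)
    {φ : 𝟙_ C ⟶ D.dual ⊗ B} (hφ : φ ∈ J.carrier _ _) : iota D φ ∈ J.carrier A B := by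
  simpa only [iota, iotaRaw, Category.assoc] using
    J.comp_post _ (J.comp_pre (ρ_ A).inv (J.whisker_mem A hφ))

theorem TensorIdeal.mem_iff_iotaInv_mem (J : TensorIdeal C) {A B : C} (D : RightDual A)
    {f : A ⟶ B} : f ∈ J.carrier A B ↔ iotaInv D f ∈ J.carrier _ _ :=
  ⟨fun hf => J.comp_pre D.coev (J.whisker_mem D.dual hf),
    fun h => D.iota_iotaInv f ▸ J.iota_mem D h⟩

theorem TensorIdeal.id_mem_iff_coev_mem (J : TensorIdeal C) {X : C} (D : RightDual X) :
    𝟙 X ∈ J.carrier X X ↔ D.coev ∈ J.carrier _ _ := by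
  rw [J.mem_iff_iotaInv_mem D, D.iotaInv_id]

theorem TensorIdeal.le_of_psi_le (D : ∀ X : C, RightDual X) {J J' : TensorIdeal C}
    (h : Psi J ≤ Psi J') : J ≤ J' :=
  fun A _ _ hf => (J'.mem_iff_iotaInv_mem (D A)).2 (h _ ((J.mem_iff_iotaInv_mem (D A)).1 hf))

theorem psi_injective (D : ∀ X : C, RightDual X) : Function.Injective (Psi (C := C)) :=
  fun _ _ h => le_antisymm (TensorIdeal.le_of_psi_le D h.le) (TensorIdeal.le_of_psi_le D h.ge)

theorem traceSub_le_psi {S : Set C} {J : TensorIdeal C} (hS : ∀ W ∈ S, 𝟙 W ∈ J.carrier W W) :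
    traceSub (𝟙_ C) S ≤ Psi J := by
  intro Y
  refine (AddSubgroup.closure_le (J.carrier _ Y)).2 ?_
  rintro _ ⟨W, hW, b, a, rfl⟩
  simpa using J.comp_post a (J.comp_pre b (hS W hW))

variable [MonoidalPreadditive C]

def TensorIdeal.spanId (X : C) : TensorIdeal C where
  carrier A B := AddSubgroup.closure {f | ∃ (W : C) (b : A ⟶ W ⊗ X) (a : W ⊗ X ⟶ B), f = b ≫ a}
  comp_pre g _ hf := AddSubgroup.apply_mem_closure_of_mapsTo (Preadditive.leftComp _ g)
    (by rintro _ ⟨W, b, a, rfl⟩; exact ⟨W, g ≫ b, a, by simp [Preadditive.leftComp]⟩) hf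
  comp_post h hf := AddSubgroup.apply_mem_closure_of_mapsTo (Preadditive.rightComp _ h)
    (by rintro _ ⟨W, b, a, rfl⟩; exact ⟨W, b, a ≫ h, by simp [Preadditive.rightComp]⟩) hf
  whisker_mem Z _ _ _ hf := AddSubgroup.apply_mem_closure_of_mapsTo (tensorLeft Z).mapAddHom
    (by
      rintro _ ⟨W, b, a, rfl⟩
      exact ⟨Z ⊗ W, (Z ◁ b) ≫ (α_ Z W X).inv, (α_ Z W X).hom ≫ (Z ◁ a), by
        simp only [Category.assoc, Iso.inv_hom_id_assoc]
        exact whiskerLeft_comp Z b a⟩) hf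

theorem TensorIdeal.id_mem_spanId (X : C) : 𝟙 X ∈ (spanId X).carrier X X :=
  AddSubgroup.subset_closure
    (show ∃ W b a, _ = b ≫ a from ⟨𝟙_ C, (λ_ X).inv, (λ_ X).hom, by simp⟩)

theorem TensorIdeal.spanId_le_iff {X : C} {J : TensorIdeal C} :
    spanId X ≤ J ↔ 𝟙 X ∈ J.carrier X X := by
  refine ⟨fun h => h X X (id_mem_spanId X), fun hX A B => ?_⟩
  show AddSubgroup.closure _ ≤ _
  refine (AddSubgroup.closure_le (J.carrier A B)).2 ?_
  rintro _ ⟨W, b, a, rfl⟩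
  simpa using J.comp_post a (J.comp_pre b (J.whisker_mem W hX))

theorem psi_spanId_le {X : C} (D : RightDual X) {M : Submod (𝟙_ C)}
    (hM : D.coev ∈ M.carrier (D.dual ⊗ X)) : Psi (TensorIdeal.spanId X) ≤ M := by
  intro Y
  show AddSubgroup.closure _ ≤ _
  refine (AddSubgroup.closure_le (M.carrier Y)).2 ?_
  rintro _ ⟨W, b, a, rfl⟩
  obtain ⟨g, rfl⟩ := D.exists_coev_comp_whiskerRight b
  simpa using M.map_mem ((g ▷ X) ≫ a) hM

end TensorIdeal

theorem IsLocalRing.eq_zero_or_eq_one_of_isIdempotentElem {R : Type*} [Ring R] [IsLocalRing R]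
    {e : R} (he : IsIdempotentElem e) : e = 0 ∨ e = 1 := by
  rcases IsLocalRing.isUnit_or_isUnit_of_add_one (add_sub_cancel e 1) with h | h
  · exact Or.inr ((IsIdempotentElem.iff_eq_one_of_isUnit h).1 he)
  · refine Or.inl ((h.mul_left_eq_zero).1 ?_)
    rw [mul_sub, mul_one, he.eq, sub_self]

section KrullSchmidt

variable {C : Type u} [Category.{v} C] [Preadditive C]

theorem isIso_of_comp_eq_id_of_isLocalRing {A Y : C} [IsLocalRing (End Y)] (hA : ¬ IsZero A)
    {a : A ⟶ Y} {b : Y ⟶ A} (hab : a ≫ b = 𝟙 A) : IsIso a := by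
  have he : @IsIdempotentElem (End Y) _ (b ≫ a) := by
    rw [IsIdempotentElem, End.mul_def, Category.assoc, reassoc_of% hab]
  refine ⟨b, hab, ?_⟩
  rcases IsLocalRing.eq_zero_or_eq_one_of_isIdempotentElem he with h | h
  · refine absurd ((IsZero.iff_id_eq_zero A).2 ?_) hA
    calc 𝟙 A = a ≫ (b ≫ a) ≫ b := by simp only [Category.assoc, reassoc_of% hab, hab]
      _ = 0 := by rw [show b ≫ a = 0 from h]; simp
  · exact h

variable [HasFiniteBiproducts C]

theorem exists_iso_of_isDirectSummand_biproduct (hKS : IsKrullSchmidt C) {A : C}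
    (hA : Indecomposable A) {n : ℕ} {f : Fin n → C} (hf : ∀ j, Indecomposable (f j))
    (hs : IsDirectSummand A (⨁ f)) : ∃ j, Nonempty (A ≅ f j) := by
  obtain ⟨i, r, hir⟩ := hs
  let _ := hKS.local_end A hA
  have hsum : (∑ j, (i ≫ biproduct.π f j) ≫ (biproduct.ι f j ≫ r) : End A) = 1 := by
    have : i ≫ (∑ j, biproduct.π f j ≫ biproduct.ι f j) ≫ r = 𝟙 A := by simp [hir]
    rw [End.one_def, ← this, Preadditive.sum_comp, Preadditive.comp_sum]
    simp only [Category.assoc]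
  obtain ⟨j, -, hu⟩ := IsLocalRing.exists_of_isUnit_sum (hsum ▸ isUnit_one)
  rw [isUnit_iff_isIso] at hu
  let _ := hKS.local_end _ (hf j)
  have := isIso_of_comp_eq_id_of_isLocalRing hA.1
    (b := (biproduct.ι f j ≫ r) ≫ inv ((i ≫ biproduct.π f j) ≫ (biproduct.ι f j ≫ r)))
    (by rw [← Category.assoc, IsIso.hom_inv_id])
  exact ⟨j, ⟨asIso (i ≫ biproduct.π f j)⟩⟩

theorem mem_traceSub_singleton_of_summands_iso (hKS : IsKrullSchmidt C) {P M Z : C}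
    (h : ∀ W : C, Indecomposable W → (∃ φ : P ⟶ W, φ ≠ 0) → IsDirectSummand W M →
      Nonempty (W ≅ Z)) (φ : P ⟶ M) : φ ∈ (traceSub P {Z}).carrier M := by
  obtain ⟨n, f, hf, ⟨e⟩⟩ := hKS.decomp M
  have hφ : φ ≫ e.hom ∈ (traceSub P {Z}).carrier (⨁ f) := by
    refine mem_traceSub_biproduct _ fun j => ?_
    by_cases hj : φ ≫ e.hom ≫ biproduct.π f j = 0
    · simp only [Category.assoc, hj, zero_mem]
    · obtain ⟨e'⟩ := h (f j) (hf j) ⟨_, hj⟩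
        ((isDirectSummand_biproduct f j).trans (IsDirectSummand.of_iso e.symm))
      exact mem_traceSub_of_iso (Set.mem_singleton Z) e' _
  simpa using (traceSub P {Z}).map_mem e.inv hφ

end KrullSchmidt

section Thick

variable {C : Type u} [Category.{v} C] [Preadditive C] [HasFiniteBiproducts C]

noncomputable def biproductFinSuccIso {n : ℕ} (f : Fin (n + 1) → C) :
    (⨁ f) ≅ f 0 ⊞ ⨁ fun i : Fin n => f i.succ :=
  biprod.uniqueUpToIso _ _ (b :=
    { pt := ⨁ f
      fst := biproduct.π f 0
      snd := biproduct.lift fun i : Fin n => biproduct.π f i.succ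
      inl := biproduct.ι f 0
      inr := biproduct.desc fun i : Fin n => biproduct.ι f i.succ
      inl_fst := by simp
      inl_snd := by ext; simp [(Fin.succ_ne_zero _).symm]
      inr_fst := by ext; simp [Fin.succ_ne_zero]
      inr_snd := by ext i j; by_cases h : i = j <;> simp [biproduct.ι_π, h] })
    (isBinaryBilimitOfTotal _
      (by simp [← biproduct.total, Fin.sum_univ_succ, biproduct.lift_desc]))

theorem isZero_biproduct_fin_zero (f : Fin 0 → C) : IsZero (⨁ f) :=
  (IsZero.iff_id_eq_zero _).2 (biproduct.hom_ext _ _ fun j => j.elim0)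

variable [MonoidalCategory C]

theorem ThickIdeal.mem_iff_of_iso (I : ThickIdeal C) {X Y : C} (e : X ≅ Y) :
    X ∈ I.carrier ↔ Y ∈ I.carrier :=
  ⟨I.iso_mem e, I.iso_mem e.symm⟩

theorem ThickIdeal.biproduct_mem_iff (I : ThickIdeal C) {T : C} (hT : T ∈ I.carrier) {n : ℕ}
    (f : Fin n → C) : (⨁ f) ∈ I.carrier ↔ ∀ i, f i ∈ I.carrier := by
  induction n with
  | zero =>
    simp only [IsEmpty.forall_iff, iff_true]
    have := I.iso_mem (isoBiprodZero (isZero_biproduct_fin_zero f)) hT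
    exact ((I.biprod_mem_iff T _).1 this).2
  | succ n ih =>
    rw [I.mem_iff_of_iso (biproductFinSuccIso f), I.biprod_mem_iff, ih, Fin.forall_fin_succ]

/-- A `ThickIdeal` is only required to be closed under summands of binary biproducts;
Krull–Schmidt decompositions upgrade this to closure under arbitrary retracts. -/
theorem ThickIdeal.mem_of_isDirectSummand (hKS : IsKrullSchmidt C) (I : ThickIdeal C) {A M : C}
    (hs : IsDirectSummand A M) (hM : M ∈ I.carrier) : A ∈ I.carrier := by
  obtain ⟨m, f, hf, ⟨eM⟩⟩ := hKS.decomp M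
  obtain ⟨n, g, hg, ⟨eA⟩⟩ := hKS.decomp A
  have hfI := (I.biproduct_mem_iff hM f).1 (I.iso_mem eM hM)
  refine I.iso_mem eA.symm ((I.biproduct_mem_iff hM g).2 fun k => ?_)
  have hgk : IsDirectSummand (g k) (⨁ f) :=
    (isDirectSummand_biproduct g k).trans <| (IsDirectSummand.of_iso eA.symm).trans <|
      hs.trans (IsDirectSummand.of_iso eM)
  obtain ⟨j, ⟨e⟩⟩ := exists_iso_of_isDirectSummand_biproduct hKS (hg k) hf hgk
  exact I.iso_mem e.symm (hfI j)

theorem mem_obIdeal_of_isDirectSummand {J : TensorIdeal C} {A M : C} (hs : IsDirectSummand A M)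
    (hM : M ∈ (obIdeal J).carrier) : A ∈ (obIdeal J).carrier := by
  obtain ⟨i, r, hir⟩ := hs
  simpa [obIdeal, hir] using J.comp_post r (J.comp_pre i hM)

end Thick

section SingleSummand

variable {C : Type u} [Category.{v} C] [Preadditive C] [MonoidalCategory C]
  [HasFiniteBiproducts C]

theorem RightDual.exists_coev_eq_comp_biproduct [MonoidalPreadditive C] {X Z : C}
    (D : RightDual X) (hX : ¬ IsZero X) (h : D.coev ∈ (traceSub (𝟙_ C) {Z}).carrier _) :
    ∃ k : ℕ, 0 < k ∧ ∃ (u : 𝟙_ C ⟶ ⨁ fun _ : Fin k => Z)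
      (v : (⨁ fun _ : Fin k => Z) ⟶ D.dual ⊗ X), D.coev = u ≫ v := by
  obtain ⟨k, u, v, huv⟩ := mem_traceSub_singleton_iff_exists_comp.1 h
  refine ⟨k, Nat.pos_of_ne_zero ?_, u, v, huv⟩
  rintro rfl
  refine D.coev_ne_zero hX ?_
  rw [huv, (isZero_biproduct_fin_zero _).eq_of_tgt u 0, zero_comp]

theorem obIdeal_le_of_psi_le_traceSub (hKS : IsKrullSchmidt C) (D : ∀ X : C, RightDual X)
    {J : TensorIdeal C} {Z : C} (hJ : Psi J ≤ traceSub (𝟙_ C) {Z}) {I : ThickIdeal C}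
    (hZ : Z ∈ I.carrier) : obIdeal J ≤ I := by
  intro A hA
  obtain ⟨m, p, q, hpq⟩ :=
    mem_traceSub_singleton_iff_exists_comp.1 (hJ _ ((J.id_mem_iff_coev_mem (D A)).1 hA))
  exact I.mem_of_isDirectSummand hKS ((D A).isDirectSummand_tensor_of_coev_eq hpq)
    (I.tensor_mem A ((I.biproduct_mem_iff hZ _).2 fun _ => hZ))

end SingleSummand

section Statement

variable (C : Type u) [Category.{v} C] [Preadditive C] [MonoidalCategory C]
  [MonoidalPreadditive C] [HasFiniteBiproducts C]

/-- **Lemma.** Let `C` be a right rigid Krull-Schmidt monoidal category,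
`Z` indecomposable with `C(𝟙,Z) ≠ 0`, and suppose there exists an indecomposable `X` such
that `add(X^∨ ⊗ X) ∩ 𝓑 = {Z}`.  Then:
(i) `co_X` factors as `𝟙 → Z^{⊕k} → X^∨ ⊗ X` for some `k > 0`;
(ii) `Ψ⁻¹(Tr_Z P_𝟙)` is the tensor ideal generated by `1_X`;
(iii) `Ob(Ψ⁻¹(Tr_Z P_𝟙))` is the thick Ob-ideal generated by `X`;
(iv) `Ob(Ψ⁻¹(Tr_Z P_𝟙))` is the thick Ob-ideal generated by `Z`. -/
theorem single_summand_lemma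
    (D : ∀ X : C, RightDual X) (hKS : IsKrullSchmidt C)
    (Z : C) (hZind : Indecomposable Z) (hZB : ∃ φ : 𝟙_ C ⟶ Z, φ ≠ 0)
    (X : C) (hXind : Indecomposable X)
    (hadd : ∀ W : C, Indecomposable W → (∃ φ : 𝟙_ C ⟶ W, φ ≠ 0) →
      (IsDirectSummand W ((D X).dual ⊗ X) ↔ Nonempty (W ≅ Z))) :
    (∃ k : ℕ, 0 < k ∧ ∃ (u : 𝟙_ C ⟶ ⨁ (fun _ : Fin k => Z))
      (v : (⨁ (fun _ : Fin k => Z)) ⟶ (D X).dual ⊗ X), (D X).coev = u ≫ v) ∧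
    (∃ J : TensorIdeal C, Psi J = traceSub (𝟙_ C) {Z}) ∧
    (∀ J : TensorIdeal C, Psi J = traceSub (𝟙_ C) {Z} →
      (𝟙 X ∈ J.carrier X X ∧
        ∀ J' : TensorIdeal C, 𝟙 X ∈ J'.carrier X X → J ≤ J') ∧
      (X ∈ (obIdeal J).carrier ∧
        ∀ I : ThickIdeal C, X ∈ I.carrier → obIdeal J ≤ I) ∧
      (Z ∈ (obIdeal J).carrier ∧
        ∀ I : ThickIdeal C, Z ∈ I.carrier → obIdeal J ≤ I)) := by
  have hZX : IsDirectSummand Z ((D X).dual ⊗ X) := (hadd Z hZind hZB).2 ⟨Iso.refl Z⟩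
  have hcoev : (D X).coev ∈ (traceSub (𝟙_ C) {Z}).carrier _ :=
    mem_traceSub_singleton_of_summands_iso hKS (fun W hW hWB => (hadd W hW hWB).1) _
  have hZspan : Z ∈ (obIdeal (TensorIdeal.spanId X)).carrier :=
    mem_obIdeal_of_isDirectSummand hZX ((obIdeal _).tensor_mem _ (TensorIdeal.id_mem_spanId X))
  have hspan : Psi (TensorIdeal.spanId X) = traceSub (𝟙_ C) {Z} :=
    le_antisymm (psi_spanId_le (D X) hcoev) (traceSub_le_psi fun _ hW => hW ▸ hZspan)
  refine ⟨(D X).exists_coev_eq_comp_biproduct hXind.1 hcoev, ⟨_, hspan⟩, fun J hJ => ?_⟩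
  obtain rfl : J = TensorIdeal.spanId X := psi_injective D (hJ.trans hspan.symm)
  have hob : ∀ I : ThickIdeal C, Z ∈ I.carrier → obIdeal (TensorIdeal.spanId X) ≤ I :=
    fun _ => obIdeal_le_of_psi_le_traceSub hKS D hspan.le
  exact ⟨⟨TensorIdeal.id_mem_spanId X, fun _ => TensorIdeal.spanId_le_iff.2⟩,
    ⟨TensorIdeal.id_mem_spanId X,
      fun I hX => hob I (I.mem_of_isDirectSummand hKS hZX (I.tensor_mem _ hX))⟩,
    ⟨hZspan, hob⟩⟩

end Statement

end TIP
end
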